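/- arXiv:1107.0624 — 2 statements merged into one kernel-verified Lean document; each statement's English description precedes it below -/
import Mathlib

section
/- Let σ be a state on systems R, A, B, X (with R a classical register appended via a measurement) satisfying: (a) S(RJX)_σ ≥ S(JX)_σ for all subsystems J (R-monotonicity), (b) S(R|A)_σ = S(R|B)_σ = 0, and (c) strong subadditivity. Then S(R|X)_σ ≤ I(A:B|X)_σ. -/
open Matrix BigOperators Finset
open scoped ComplexOrder

noncomputable section

variable {ι : Type*}

/-- Merge an assignment on a subset `J` with one on its complement. -/
def Finset.mergePi [Fintype ι] [DecidableEq ι] {s : ι → Type*} (J : Finset ι)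
    (a : (i : J) → s i.1) (z : (i : (Jᶜ : Finset ι)) → s i.1) : (i : ι) → s i :=
  fun i => if h : i ∈ J then a ⟨i, h⟩ else z ⟨i, Finset.mem_compl.mpr h⟩

/-- Partial trace: the reduced matrix on the subsystems in `J`. -/
noncomputable def reduceState [Fintype ι] [DecidableEq ι] {s : ι → Type*}
    [∀ i, Fintype (s i)] [∀ i, DecidableEq (s i)]
    (ρ : Matrix ((i : ι) → s i) ((i : ι) → s i) ℂ) (J : Finset ι) :
    Matrix ((i : J) → s i.1) ((i : J) → s i.1) ℂ :=
  fun a b => ∑ z : (i : (Jᶜ : Finset ι)) → s i.1, ρ (J.mergePi a z) (J.mergePi b z)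

/-- Von Neumann entropy of a (Hermitian) matrix, via its eigenvalues. -/
noncomputable def vnEntropy {α : Type*} [Fintype α] [DecidableEq α]
    (ρ : Matrix α α ℂ) : ℝ :=
  if h : ρ.IsHermitian then -∑ i, (h.eigenvalues i) * Real.log (h.eigenvalues i) else 0

/-- Entropy of the reduced state on the subsystems in `J`. -/
noncomputable def Sv [Fintype ι] [DecidableEq ι] {s : ι → Type*}
    [∀ i, Fintype (s i)] [∀ i, DecidableEq (s i)]
    (ρ : Matrix ((i : ι) → s i) ((i : ι) → s i) ℂ) (J : Finset ι) : ℝ :=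
  vnEntropy (reduceState ρ J)

/-- Conditional mutual information I(α:β|γ). -/
noncomputable def Iq [Fintype ι] [DecidableEq ι] {s : ι → Type*}
    [∀ i, Fintype (s i)] [∀ i, DecidableEq (s i)]
    (ρ : Matrix ((i : ι) → s i) ((i : ι) → s i) ℂ) (α β γ : Finset ι) : ℝ :=
  Sv ρ (α ∪ γ) + Sv ρ (β ∪ γ) - Sv ρ γ - Sv ρ (α ∪ β ∪ γ)

/-- A density matrix: positive semidefinite with unit trace. -/
def IsDensity {α : Type*} [Fintype α] (ρ : Matrix α α ℂ) : Prop :=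
  ρ.PosSemidef ∧ ρ.trace = 1

abbrev Idx (n : ℕ) := Sum (Fin 3) (Fin n)
def pA (n : ℕ) : Finset (Idx n) := {Sum.inl 0}
def pB (n : ℕ) : Finset (Idx n) := {Sum.inl 1}
def pC (n : ℕ) : Finset (Idx n) := {Sum.inl 2}
def pX (n : ℕ) (i : Fin n) : Finset (Idx n) := {Sum.inr i}
def pXall (n : ℕ) : Finset (Idx n) := Finset.univ.image Sum.inr

/-- For a state `σ` on systems `R = 0, A = 1, B = 2, X = 3` satisfying R-monotonicity,
`S(R|A) = S(R|B) = 0`, and strong subadditivity, one has `S(R|X) ≤ I(A:B|X)`. -/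
theorem conditional_entropy_of_register_bound (s : Fin 4 → Type)
    [∀ i, Fintype (s i)] [∀ i, DecidableEq (s i)]
    (σ : Matrix ((i : Fin 4) → s i) ((i : Fin 4) → s i) ℂ)
    (hσ : IsDensity σ)
    -- (a) R-monotonicity: appending R never decreases entropy
    (hmono : ∀ J : Finset (Fin 4), Sv σ ({0} ∪ J) ≥ Sv σ J)
    -- (b) the register is determined by A and by B
    (hRA : Sv σ ({0, 1} : Finset (Fin 4)) - Sv σ {1} = 0)
    (hRB : Sv σ ({0, 2} : Finset (Fin 4)) - Sv σ {2} = 0)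
    -- (c) strong subadditivity
    (hSSA : ∀ α β γ : Finset (Fin 4), Disjoint α β → Disjoint α γ → Disjoint β γ →
      Iq σ α β γ ≥ 0) :
    Sv σ ({0, 3} : Finset (Fin 4)) - Sv σ {3} ≤ Iq σ {1} {2} {3} := by
  have e1 : ({1} ∪ {3} : Finset (Fin 4)) = {1,3} := by decide
  have e2 : ({2} ∪ {3} : Finset (Fin 4)) = {2,3} := by decide
  have e3 : ({1} ∪ {2} ∪ {3} : Finset (Fin 4)) = {1,2,3} := by decide
  have e4 : ({1} ∪ {0,3} : Finset (Fin 4)) = {0,1,3} := by decide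
  have e5 : ({2} ∪ {0,3} : Finset (Fin 4)) = {0,2,3} := by decide
  have e6 : ({1} ∪ {2} ∪ {0,3} : Finset (Fin 4)) = {0,1,2,3} := by decide
  have e7 : ({0} ∪ {1} : Finset (Fin 4)) = {0,1} := by decide
  have e8 : ({3} ∪ {1} : Finset (Fin 4)) = {1,3} := by decide
  have e9 : ({0} ∪ {3} ∪ {1} : Finset (Fin 4)) = {0,1,3} := by decide
  have e10 : ({3} ∪ {2} : Finset (Fin 4)) = {2,3} := by decide
  have e11 : ({0} ∪ {3} ∪ {2} : Finset (Fin 4)) = {0,2,3} := by decide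
  have e12 : ({0} ∪ {1,2,3} : Finset (Fin 4)) = {0,1,2,3} := by decide
  have m := hmono {1,2,3}
  rw [e12] at m
  have s1 := hSSA {1} {2} {0,3} (by decide) (by decide) (by decide)
  have s2 := hSSA {0} {3} {1} (by decide) (by decide) (by decide)
  have s3 := hSSA {0} {3} {2} (by decide) (by decide) (by decide)
  unfold Iq at s1 s2 s3 ⊢
  rw [e4, e5, e6] at s1
  rw [e7, e8, e9] at s2
  rw [show ({0} ∪ {2} : Finset (Fin 4)) = {0,2} from by decide, e10, e11] at s3
  rw [e1, e2, e3]
  linarith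
end
end

section
/- Let X_1,...,X_n, A, B, C be jointly distributed discrete random variables satisfying I(A:C|B) = 0 and I(B:C|A) = 0. Then H(X_1...X_n) + (n-1) I(AB:C) ≤ Σ_{i=1}^n H(X_i) + Σ_{i=1}^n I(A:B|X_i). -/
/-!
Let `W` be the Gács–Körner common part of `A` and `B`: the connected component of the value of `A`
in the bipartite graph joining the values `a`, `b` with `P(a, b) > 0`. It is a function of `A`
and, almost surely, of `B`.

The two constraints give `P(c | a) = P(c | a, b) = P(c | b)` whenever `P(a, b) > 0`, so `P(c | a)`
is constant on the components: `C` and `AB` are independent given `W`, and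
`I(AB:C) = I(W:C) ≤ H(W)`. As `W` is a common function of `A` and `B`, `H(W | X_i) ≤ I(A:B | X_i)`,
and subadditivity of entropy given `W` yields `H(X_1 … X_n) + (n - 1) H(W) ≤ ∑ H(X_i W)`.
-/

open Finset BigOperators

noncomputable section

variable {ι : Type*}

/-- The marginal of a joint probability mass function on the coordinates in `J`. -/
noncomputable def marginal [Fintype ι] [DecidableEq ι] {s : ι → Type*}
    [∀ i, Fintype (s i)] [∀ i, DecidableEq (s i)]
    (p : ((i : ι) → s i) → ℝ) (J : Finset ι) : ((i : J) → s i.1) → ℝ :=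
  fun a => ∑ z : (i : (Jᶜ : Finset ι)) → s i.1, p (J.mergePi a z)

/-- Shannon entropy of the marginal on the coordinates in `J`. -/
noncomputable def Hsh [Fintype ι] [DecidableEq ι] {s : ι → Type*}
    [∀ i, Fintype (s i)] [∀ i, DecidableEq (s i)]
    (p : ((i : ι) → s i) → ℝ) (J : Finset ι) : ℝ :=
  -∑ a : (i : J) → s i.1, marginal p J a * Real.log (marginal p J a)

/-- Classical conditional mutual information `I(α:β|γ)` of a joint pmf. -/
noncomputable def Ish [Fintype ι] [DecidableEq ι] {s : ι → Type*}
    [∀ i, Fintype (s i)] [∀ i, DecidableEq (s i)]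
    (p : ((i : ι) → s i) → ℝ) (α β γ : Finset ι) : ℝ :=
  Hsh p (α ∪ γ) + Hsh p (β ∪ γ) - Hsh p γ - Hsh p (α ∪ β ∪ γ)

end

open Real InformationTheory

theorem Finset.restrict_eq_restrict_iff {ι : Type*} {β : ι → Type*} {s : Finset ι}
    {f g : (i : ι) → β i} : s.restrict f = s.restrict g ↔ ∀ i ∈ s, f i = g i := by
  simp [funext_iff]

noncomputable section

namespace FiniteEntropy

open scoped Classical

variable {Ω α β γ δ : Type*} [Fintype Ω] (p : Ω → ℝ)

def law (f : Ω → α) (a : α) : ℝ := ∑ ω with f ω = a, p ω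

def entropy [Fintype α] (f : Ω → α) : ℝ := -∑ a, law p f a * log (law p f a)

def condMutualInfo [Fintype α] [Fintype β] [Fintype γ]
    (X : Ω → α) (Y : Ω → β) (Z : Ω → γ) : ℝ :=
  entropy p (fun ω => (X ω, Z ω)) + entropy p (fun ω => (Y ω, Z ω)) - entropy p Z
    - entropy p (fun ω => (X ω, Y ω, Z ω))

def mutualInfo [Fintype α] [Fintype β] (X : Ω → α) (Y : Ω → β) : ℝ :=
  entropy p X + entropy p Y - entropy p (fun ω => (X ω, Y ω))

-- The law of `(X, Y, Z)` if `X` and `Y` were independent given `Z`; `I(X:Y|Z)` is the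
-- Kullback–Leibler divergence of the true law from it.
def condProdLaw (X : Ω → α) (Y : Ω → β) (Z : Ω → γ) (t : α × β × γ) : ℝ :=
  law p (fun ω => (X ω, Z ω)) (t.1, t.2.2) * law p (fun ω => (Y ω, Z ω)) (t.2.1, t.2.2) /
    law p Z t.2.2

def condLaw (Y : Ω → β) (Z : Ω → γ) (y : β) (z : γ) : ℝ :=
  law p (fun ω => (Y ω, Z ω)) (y, z) / law p Z z

variable {p}

section Law

variable {f : Ω → α} {g : Ω → β}

theorem law_nonneg (hp : ∀ ω, 0 ≤ p ω) (f : Ω → α) (a : α) : 0 ≤ law p f a :=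
  sum_nonneg fun ω _ => hp ω

theorem law_congr {a : α} {b : β} (h : ∀ ω, p ω ≠ 0 → (f ω = a ↔ g ω = b)) :
    law p f a = law p g b := by
  simp only [law, sum_filter]
  refine sum_congr rfl fun ω _ => ?_
  by_cases hω : p ω = 0
  · simp [hω]
  · simp only [h ω hω]

theorem exists_of_law_ne_zero {a : α} (h : law p f a ≠ 0) : ∃ ω, p ω ≠ 0 ∧ f ω = a := by
  obtain ⟨ω, hω, hpω⟩ := exists_ne_zero_of_sum_ne_zero h
  exact ⟨ω, hpω, (mem_filter.mp hω).2⟩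

theorem law_apply_ne_zero (hp : ∀ ω, 0 ≤ p ω) {ω : Ω} (hω : p ω ≠ 0) (f : Ω → α) :
    law p f (f ω) ≠ 0 := by
  refine (lt_of_lt_of_le (lt_of_le_of_ne (hp ω) hω.symm) ?_).ne'
  exact single_le_sum (f := p) (fun ω _ => hp ω) (by simp)

theorem law_of_subsingleton [Subsingleton α] (f : Ω → α) (a : α) : law p f a = ∑ ω, p ω := by
  rw [law]
  congr 1
  ext ω
  simp [Subsingleton.elim (f ω) a]

theorem sum_law [Fintype α] (f : Ω → α) : ∑ a, law p f a = ∑ ω, p ω :=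
  sum_fiberwise univ f p

theorem law_comp_eq_sum [Fintype α] (e : α → β) (f : Ω → α) (b : β) :
    law p (fun ω => e (f ω)) b = ∑ a with e a = b, law p f a := by
  simp only [law]
  rw [sum_fiberwise_eq_sum_filter univ _ f p]
  simp

theorem law_le_law_comp (hp : ∀ ω, 0 ≤ p ω) (e : α → β) (f : Ω → α) (a : α) :
    law p f a ≤ law p (fun ω => e (f ω)) (e a) := by
  refine sum_le_sum_of_subset_of_nonneg (fun ω hω => ?_) fun ω _ _ => hp ω
  simp only [mem_filter, mem_univ, true_and] at hω ⊢
  rw [hω]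

theorem law_pair_of_eq_comp {Z : Ω → γ} (e : α → γ) (hZ : ∀ ω, Z ω = e (f ω)) (a : α) (c : γ) :
    law p (fun ω => (f ω, Z ω)) (a, c) = if e a = c then law p f a else 0 := by
  split_ifs with hc
  · exact law_congr fun ω _ => by
      rw [Prod.mk.injEq, hZ, ← hc]
      exact and_iff_left_of_imp (congrArg e)
  · simp only [law]
    refine sum_eq_zero fun ω hω => absurd ?_ hc
    simp only [mem_filter, mem_univ, true_and, Prod.mk.injEq, hZ] at hω
    rw [← hω.1, hω.2]

theorem sum_law_pair_right [Fintype α] (f : Ω → α) (g : Ω → β) (b : β) :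
    ∑ a, law p (fun ω => (f ω, g ω)) (a, b) = law p g b := by
  rw [law, ← sum_fiberwise _ f]
  simp only [law, filter_filter, Prod.mk.injEq, and_comm]

theorem law_pair_comp_eq_sum [Fintype α] [Fintype β] (e : α → γ) (f : Ω → α) (g : Ω → β)
    (b : β) (c : γ) :
    law p (fun ω => (g ω, e (f ω))) (b, c) =
      ∑ a with e a = c, law p (fun ω => (g ω, f ω)) (b, a) := by
  refine (law_comp_eq_sum (fun t : β × α => (t.1, e t.2)) (fun ω => (g ω, f ω)) (b, c)).trans ?_
  rw [sum_filter, Fintype.sum_prod_type, sum_comm, sum_filter]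
  refine sum_congr rfl fun a _ => ?_
  simp [Prod.mk.injEq, ite_and]

theorem law_swap (f : Ω → α) (g : Ω → β) (a : α) (b : β) :
    law p (fun ω => (g ω, f ω)) (b, a) = law p (fun ω => (f ω, g ω)) (a, b) :=
  law_congr fun ω _ => by simp only [Prod.mk.injEq, and_comm]

theorem law_eq_zero_of_law_comp_eq_zero (hp : ∀ ω, 0 ≤ p ω) {e : α → β} {a : α}
    (h : law p (fun ω => e (f ω)) (e a) = 0) : law p f a = 0 :=
  le_antisymm ((law_le_law_comp hp e f a).trans h.le) (law_nonneg hp f a)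

theorem law_pair_eq_condLaw_mul (hp : ∀ ω, 0 ≤ p ω) (Y : Ω → β) (Z : Ω → γ) (y : β) (z : γ) :
    law p (fun ω => (Y ω, Z ω)) (y, z) = condLaw p Y Z y z * law p Z z := by
  by_cases hz : law p Z z = 0
  · rw [hz, mul_zero]
    exact law_eq_zero_of_law_comp_eq_zero hp (e := Prod.snd) hz
  · rw [condLaw, div_mul_cancel₀ _ hz]

theorem condProdLaw_nonneg (hp : ∀ ω, 0 ≤ p ω) (X : Ω → α) (Y : Ω → β) (Z : Ω → γ)
    (t : α × β × γ) : 0 ≤ condProdLaw p X Y Z t :=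
  div_nonneg (mul_nonneg (law_nonneg hp _ _) (law_nonneg hp _ _)) (law_nonneg hp _ _)

end Law

section Entropy

variable [Fintype α] [Fintype β] {f : Ω → α} {g : Ω → β}

theorem entropy_comp_eq_sum (e : α → β) (f : Ω → α) :
    entropy p (fun ω => e (f ω)) = -∑ a, law p f a * log (law p (fun ω => e (f ω)) (e a)) := by
  rw [entropy, ← sum_fiberwise univ e]
  congr 1
  refine sum_congr rfl fun b _ => ?_
  rw [law_comp_eq_sum e f b, sum_mul, ← law_comp_eq_sum e f b]
  refine sum_congr rfl fun a ha => ?_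
  rw [(mem_filter.mp ha).2]

theorem entropy_congr_fibers
    (h : ∀ ω ω', p ω ≠ 0 → p ω' ≠ 0 → (f ω = f ω' ↔ g ω = g ω')) :
    entropy p f = entropy p g := by
  rw [entropy_comp_eq_sum Prod.fst (fun ω => (f ω, g ω)),
    entropy_comp_eq_sum Prod.snd (fun ω => (f ω, g ω))]
  congr 1
  refine sum_congr rfl fun t _ => ?_
  by_cases ht : law p (fun ω => (f ω, g ω)) t = 0
  · simp [ht]
  obtain ⟨ω₀, hω₀, rfl⟩ := exists_of_law_ne_zero ht
  congr 2
  exact law_congr fun ω hω => h ω ω₀ hω hω₀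

theorem entropy_pair_eq_left (h : ∀ ω ω', p ω ≠ 0 → p ω' ≠ 0 → f ω = f ω' → g ω = g ω') :
    entropy p (fun ω => (f ω, g ω)) = entropy p f :=
  entropy_congr_fibers fun ω ω' hω hω' =>
    ⟨fun e => (Prod.ext_iff.1 e).1, fun e => Prod.ext e (h ω ω' hω hω' e)⟩

theorem entropy_pair_of_subsingleton [Subsingleton β] (f : Ω → α) (g : Ω → β) :
    entropy p (fun ω => (f ω, g ω)) = entropy p f :=
  entropy_pair_eq_left fun _ _ _ _ _ => Subsingleton.elim _ _

theorem entropy_le_entropy_pair (hp : ∀ ω, 0 ≤ p ω) (f : Ω → α) (g : Ω → β) :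
    entropy p f ≤ entropy p (fun ω => (f ω, g ω)) := by
  rw [entropy_comp_eq_sum Prod.fst (fun ω => (f ω, g ω)), entropy, neg_le_neg_iff]
  refine sum_le_sum fun t _ => ?_
  rcases (law_nonneg hp (fun ω => (f ω, g ω)) t).eq_or_lt with ht | ht
  · simp [← ht]
  exact mul_le_mul_of_nonneg_left (log_le_log ht (law_le_law_comp hp Prod.fst _ t)) ht.le

theorem entropy_of_subsingleton [Subsingleton α] (hp1 : ∑ ω, p ω = 1) (f : Ω → α) :
    entropy p f = 0 := by
  simp [entropy, law_of_subsingleton, hp1]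

end Entropy

theorem mul_log_eq_klFun {x y z w : ℝ} (hx : 0 ≤ x) (hxy : x ≤ y) (hxz : x ≤ z) (hyw : y ≤ w) :
    x * (log x + log w - log y - log z) = y * z / w * klFun (x / (y * z / w)) + x - y * z / w := by
  rcases hx.eq_or_lt with rfl | hx
  · simp [klFun_zero]
  have hy := hx.trans_le hxy
  have hz := hx.trans_le hxz
  have hw := hy.trans_le hyw
  rw [klFun_apply, log_div hx.ne' (by positivity), log_div (by positivity) hw.ne',
    log_mul hy.ne' hz.ne']
  field_simp
  ring

theorem klFun_mul_eq_zero_iff {x y z w : ℝ} (hx : 0 ≤ x) (hxy : x ≤ y) (hxz : x ≤ z)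
    (hyw : y ≤ w) : y * z / w * klFun (x / (y * z / w)) = 0 ↔ x * w = y * z := by
  rcases hx.eq_or_lt with rfl | hx
  · rcases (hx.trans hxy).eq_or_lt with rfl | hy
    · simp
    simp [klFun_zero, (hy.trans_le hyw).ne', hy.ne']
  have hy := hx.trans_le hxy
  have hz := hx.trans_le hxz
  have hw := hy.trans_le hyw
  rw [mul_eq_zero, or_iff_right (by positivity), klFun_eq_zero_iff (by positivity),
    div_eq_one_iff_eq (by positivity)]
  field_simp

section CondMutualInfo

variable [Fintype α] [Fintype β] [Fintype γ] (X : Ω → α) (Y : Ω → β) (Z : Ω → γ)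

theorem condMutualInfo_eq_sum :
    condMutualInfo p X Y Z = ∑ t, law p (fun ω => (X ω, Y ω, Z ω)) t *
      (log (law p (fun ω => (X ω, Y ω, Z ω)) t) + log (law p Z t.2.2)
        - log (law p (fun ω => (X ω, Z ω)) (t.1, t.2.2))
        - log (law p (fun ω => (Y ω, Z ω)) (t.2.1, t.2.2))) := by
  rw [condMutualInfo,
    entropy_comp_eq_sum (fun t : α × β × γ => (t.1, t.2.2)) (fun ω => (X ω, Y ω, Z ω)),
    entropy_comp_eq_sum (fun t : α × β × γ => (t.2.1, t.2.2)) (fun ω => (X ω, Y ω, Z ω)),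
    entropy_comp_eq_sum (fun t : α × β × γ => t.2.2) (fun ω => (X ω, Y ω, Z ω)), entropy]
  simp only [mul_add, mul_sub, sum_add_distrib, sum_sub_distrib]
  ring

theorem sum_condProdLaw (hp : ∀ ω, 0 ≤ p ω) : ∑ t, condProdLaw p X Y Z t = ∑ ω, p ω := by
  rw [Fintype.sum_prod_type, sum_comm, ← sum_law (fun ω => (Y ω, Z ω))]
  refine sum_congr rfl fun s _ => ?_
  simp only [condProdLaw, mul_div_assoc, ← sum_mul, sum_law_pair_right]
  by_cases h : law p Z s.2 = 0
  · rw [h, zero_mul, law_eq_zero_of_law_comp_eq_zero hp (e := Prod.snd) h]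
  · field_simp

theorem condMutualInfo_eq_sum_klFun (hp : ∀ ω, 0 ≤ p ω) :
    condMutualInfo p X Y Z = ∑ t, condProdLaw p X Y Z t *
      klFun (law p (fun ω => (X ω, Y ω, Z ω)) t / condProdLaw p X Y Z t) := by
  have hterm : ∀ t, law p (fun ω => (X ω, Y ω, Z ω)) t *
      (log (law p (fun ω => (X ω, Y ω, Z ω)) t) + log (law p Z t.2.2)
        - log (law p (fun ω => (X ω, Z ω)) (t.1, t.2.2))
        - log (law p (fun ω => (Y ω, Z ω)) (t.2.1, t.2.2))) =
      condProdLaw p X Y Z t * klFun (law p (fun ω => (X ω, Y ω, Z ω)) t / condProdLaw p X Y Z t)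
        + law p (fun ω => (X ω, Y ω, Z ω)) t - condProdLaw p X Y Z t := fun t =>
    mul_log_eq_klFun (law_nonneg hp _ t) (law_le_law_comp hp (fun t => (t.1, t.2.2)) _ t)
      (law_le_law_comp hp (fun t => (t.2.1, t.2.2)) _ t)
      (law_le_law_comp hp Prod.snd (fun ω => (X ω, Z ω)) _)
  rw [condMutualInfo_eq_sum, sum_congr rfl fun t _ => hterm t, sum_sub_distrib, sum_add_distrib,
    sum_law, sum_condProdLaw X Y Z hp, add_sub_cancel_right]

theorem condMutualInfo_nonneg (hp : ∀ ω, 0 ≤ p ω) : 0 ≤ condMutualInfo p X Y Z := by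
  rw [condMutualInfo_eq_sum_klFun X Y Z hp]
  exact sum_nonneg fun t _ => mul_nonneg (condProdLaw_nonneg hp X Y Z t)
    (klFun_nonneg (div_nonneg (law_nonneg hp _ t) (condProdLaw_nonneg hp X Y Z t)))

theorem condMutualInfo_eq_zero_iff (hp : ∀ ω, 0 ≤ p ω) :
    condMutualInfo p X Y Z = 0 ↔ ∀ x y z, law p (fun ω => (X ω, Y ω, Z ω)) (x, y, z) * law p Z z =
      law p (fun ω => (X ω, Z ω)) (x, z) * law p (fun ω => (Y ω, Z ω)) (y, z) := by
  rw [condMutualInfo_eq_sum_klFun X Y Z hp, sum_eq_zero_iff_of_nonneg fun t _ =>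
    mul_nonneg (condProdLaw_nonneg hp X Y Z t)
      (klFun_nonneg (div_nonneg (law_nonneg hp _ t) (condProdLaw_nonneg hp X Y Z t)))]
  simp only [mem_univ, true_implies, Prod.forall]
  refine forall₃_congr fun x y z => ?_
  exact klFun_mul_eq_zero_iff (law_nonneg hp _ _)
    (law_le_law_comp hp (fun t : α × β × γ => (t.1, t.2.2)) _ _)
    (law_le_law_comp hp (fun t : α × β × γ => (t.2.1, t.2.2)) _ _)
    (law_le_law_comp hp Prod.snd (fun ω => (X ω, Z ω)) _)

theorem law_triple_eq_mul_condLaw (hp : ∀ ω, 0 ≤ p ω) (h : condMutualInfo p X Y Z = 0)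
    (x : α) (y : β) (z : γ) :
    law p (fun ω => (X ω, Y ω, Z ω)) (x, y, z) =
      law p (fun ω => (X ω, Z ω)) (x, z) * condLaw p Y Z y z := by
  have hfac := (condMutualInfo_eq_zero_iff X Y Z hp).1 h x y z
  by_cases hz : law p Z z = 0
  · rw [law_eq_zero_of_law_comp_eq_zero hp (e := fun t : α × β × γ => t.2.2) hz,
      law_eq_zero_of_law_comp_eq_zero hp (e := Prod.snd) hz, zero_mul]
  · rw [condLaw, mul_div_assoc', eq_div_iff hz, hfac]

theorem condMutualInfo_of_subsingleton [Subsingleton γ] (hp1 : ∑ ω, p ω = 1) :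
    condMutualInfo p X Y Z = mutualInfo p X Y := by
  rw [condMutualInfo, mutualInfo, entropy_pair_of_subsingleton, entropy_pair_of_subsingleton,
    entropy_of_subsingleton hp1 Z, sub_zero, ← entropy_pair_of_subsingleton (fun ω => (X ω, Y ω)) Z]
  congr 1
  exact entropy_congr_fibers fun ω ω' _ _ => by simp only [Prod.mk.injEq, and_assoc]

end CondMutualInfo

theorem mutualInfo_congr_left [Fintype α] [Fintype β] [Fintype γ] {X : Ω → α} {X' : Ω → β}
    (h : ∀ ω ω', p ω ≠ 0 → p ω' ≠ 0 → (X ω = X ω' ↔ X' ω = X' ω')) (Y : Ω → γ) :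
    mutualInfo p X Y = mutualInfo p X' Y := by
  rw [mutualInfo, mutualInfo, entropy_congr_fibers h,
    entropy_congr_fibers (f := fun ω => (X ω, Y ω)) (g := fun ω => (X' ω, Y ω))
      fun ω ω' hω hω' => by simp only [Prod.mk.injEq, h ω ω' hω hω']]

theorem mutualInfo_nonneg [Fintype α] [Fintype β] (hp : ∀ ω, 0 ≤ p ω) (hp1 : ∑ ω, p ω = 1)
    (X : Ω → α) (Y : Ω → β) : 0 ≤ mutualInfo p X Y := by
  rw [← condMutualInfo_of_subsingleton X Y (fun _ => ()) hp1]
  exact condMutualInfo_nonneg X Y _ hp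

section CommonPart

variable (A : Ω → α) (B : Ω → β) (C : Ω → γ)

variable (p) in
def commonRel (a a' : α) : Prop :=
  ∃ b, law p (fun ω => (A ω, B ω)) (a, b) ≠ 0 ∧ law p (fun ω => (A ω, B ω)) (a', b) ≠ 0

-- The Gács–Körner common part of `A` and `B`.
variable (p) in
abbrev CommonPart : Type _ := Quot (commonRel p A B)

variable (p) in
def commonPart (ω : Ω) : CommonPart p A B := Quot.mk _ (A ω)

theorem commonPart_eq_of_left_eq {ω ω' : Ω} (h : A ω = A ω') :
    commonPart p A B ω = commonPart p A B ω' :=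
  congrArg (Quot.mk _) h

theorem commonPart_eq_of_right_eq (hp : ∀ ω, 0 ≤ p ω) {ω ω' : Ω} (hω : p ω ≠ 0) (hω' : p ω' ≠ 0)
    (h : B ω = B ω') : commonPart p A B ω = commonPart p A B ω' :=
  Quot.sound ⟨B ω, law_apply_ne_zero hp hω fun ω => (A ω, B ω),
    h ▸ law_apply_ne_zero hp hω' fun ω => (A ω, B ω)⟩

variable [Fintype α] [Fintype β] [Fintype γ] [Fintype δ]

instance : Fintype (CommonPart p A B) := Fintype.ofSurjective (Quot.mk _) Quot.mk_surjective

theorem entropy_pair_commonPart_sub_le (hp : ∀ ω, 0 ≤ p ω) (X : Ω → δ) :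
    entropy p (fun ω => (X ω, commonPart p A B ω)) - entropy p X ≤ condMutualInfo p A B X := by
  have h := condMutualInfo_nonneg A B (fun ω => (X ω, commonPart p A B ω)) hp
  have hA : entropy p (fun ω => (A ω, X ω, commonPart p A B ω)) = entropy p (fun ω => (A ω, X ω)) :=
    entropy_congr_fibers fun ω ω' _ _ => by
      simp only [Prod.mk.injEq]
      exact ⟨fun h => ⟨h.1, h.2.1⟩, fun h => ⟨h.1, h.2, commonPart_eq_of_left_eq A B h.1⟩⟩
  have hB : entropy p (fun ω => (B ω, X ω, commonPart p A B ω)) = entropy p (fun ω => (B ω, X ω)) :=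
    entropy_congr_fibers fun ω ω' hω hω' => by
      simp only [Prod.mk.injEq]
      exact ⟨fun h => ⟨h.1, h.2.1⟩,
        fun h => ⟨h.1, h.2, commonPart_eq_of_right_eq A B hp hω hω' h.1⟩⟩
  have hAB : entropy p (fun ω => (A ω, B ω, X ω, commonPart p A B ω)) =
      entropy p (fun ω => (A ω, B ω, X ω)) :=
    entropy_congr_fibers fun ω ω' _ _ => by
      simp only [Prod.mk.injEq]
      exact ⟨fun h => ⟨h.1, h.2.1, h.2.2.1⟩,
        fun h => ⟨h.1, h.2.1, h.2.2, commonPart_eq_of_left_eq A B h.1⟩⟩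
  rw [condMutualInfo, hA, hB, hAB] at h
  rw [condMutualInfo]
  linarith

theorem condLaw_eq_of_law_ne_zero (hp : ∀ ω, 0 ≤ p ω) (hAC : condMutualInfo p A C B = 0)
    (hBC : condMutualInfo p B C A = 0) {a : α} {b : β}
    (hab : law p (fun ω => (A ω, B ω)) (a, b) ≠ 0) (c : γ) :
    condLaw p C A c a = condLaw p C B c b := by
  have h₁ := law_triple_eq_mul_condLaw A C B hp hAC a c b
  have h₂ := law_triple_eq_mul_condLaw B C A hp hBC b c a
  have e₁ : law p (fun ω => (B ω, C ω, A ω)) (b, c, a) =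
      law p (fun ω => (A ω, C ω, B ω)) (a, c, b) :=
    law_congr fun ω _ => by simp only [Prod.mk.injEq]; tauto
  rw [e₁, law_swap A B, h₁] at h₂
  exact (mul_left_cancel₀ hab h₂).symm

theorem condLaw_eq_of_commonPart_eq (hp : ∀ ω, 0 ≤ p ω) (hAC : condMutualInfo p A C B = 0)
    (hBC : condMutualInfo p B C A = 0) {a a' : α}
    (h : (Quot.mk _ a : CommonPart p A B) = Quot.mk _ a') (c : γ) :
    condLaw p C A c a = condLaw p C A c a' :=
  congrFun (congrArg (Quot.lift (fun a c => condLaw p C A c a)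
    fun _ _ ⟨_, hab, ha'b⟩ => funext fun c =>
      (condLaw_eq_of_law_ne_zero A B C hp hAC hBC hab c).trans
        (condLaw_eq_of_law_ne_zero A B C hp hAC hBC ha'b c).symm) h) c

theorem law_pair_commonPart (hp : ∀ ω, 0 ≤ p ω) (hAC : condMutualInfo p A C B = 0)
    (hBC : condMutualInfo p B C A = 0) (a : α) (c : γ) :
    law p (fun ω => (C ω, commonPart p A B ω)) (c, Quot.mk _ a) =
      condLaw p C A c a * law p (commonPart p A B) (Quot.mk _ a) := by
  show law p (fun ω => (C ω, Quot.mk _ (A ω))) _ = _ * law p (fun ω => Quot.mk _ (A ω)) _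
  rw [law_pair_comp_eq_sum, law_comp_eq_sum, mul_sum]
  refine sum_congr rfl fun a' ha' => ?_
  rw [law_pair_eq_condLaw_mul hp,
    condLaw_eq_of_commonPart_eq A B C hp hAC hBC (mem_filter.1 ha').2]

theorem condMutualInfo_commonPart_eq_zero (hp : ∀ ω, 0 ≤ p ω) (hAC : condMutualInfo p A C B = 0)
    (hBC : condMutualInfo p B C A = 0) :
    condMutualInfo p (fun ω => (A ω, B ω)) C (commonPart p A B) = 0 := by
  rw [condMutualInfo_eq_zero_iff _ _ _ hp]
  rintro ⟨a, b⟩ c w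
  obtain ⟨a₀, rfl⟩ := Quot.mk_surjective w
  have hABC : law p (fun ω => ((A ω, B ω), C ω)) ((a, b), c) =
      law p (fun ω => (A ω, B ω)) (a, b) * condLaw p C A c a := by
    rw [← law_swap A B, ← law_triple_eq_mul_condLaw B C A hp hBC b c a]
    exact law_congr fun ω _ => by simp only [Prod.mk.injEq]; tauto
  rw [law_congr (g := fun ω => (((A ω, B ω), C ω), commonPart p A B ω))
      (b := (((a, b), c), Quot.mk _ a₀)) fun ω _ => by simp only [Prod.mk.injEq, and_assoc],
    law_pair_of_eq_comp (Z := commonPart p A B) (fun x => Quot.mk _ x.1.1) (fun ω => rfl),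
    law_pair_of_eq_comp (Z := commonPart p A B) (fun x => Quot.mk _ x.1) (fun ω => rfl),
    law_pair_commonPart A B C hp hAC hBC a₀ c]
  split_ifs with h
  · rw [hABC, condLaw_eq_of_commonPart_eq A B C hp hAC hBC h]
    ring
  · simp

theorem mutualInfo_le_entropy_commonPart (hp : ∀ ω, 0 ≤ p ω) (hAC : condMutualInfo p A C B = 0)
    (hBC : condMutualInfo p B C A = 0) :
    mutualInfo p (fun ω => (A ω, B ω)) C ≤ entropy p (commonPart p A B) := by
  have h := condMutualInfo_commonPart_eq_zero A B C hp hAC hBC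
  have hAB : entropy p (fun ω => ((A ω, B ω), commonPart p A B ω)) =
      entropy p (fun ω => (A ω, B ω)) :=
    entropy_pair_eq_left fun ω ω' _ _ e => commonPart_eq_of_left_eq A B (Prod.ext_iff.1 e).1
  have hABC : entropy p (fun ω => ((A ω, B ω), C ω, commonPart p A B ω)) =
      entropy p (fun ω => ((A ω, B ω), C ω)) :=
    entropy_congr_fibers fun ω ω' _ _ => by
      simp only [Prod.mk.injEq]
      exact ⟨fun e => ⟨e.1, e.2.1⟩,
        fun e => ⟨e.1, e.2, commonPart_eq_of_left_eq A B e.1.1⟩⟩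
  rw [condMutualInfo, hAB, hABC] at h
  have := entropy_le_entropy_pair hp C (commonPart p A B)
  rw [mutualInfo]
  linarith

end CommonPart

theorem entropy_restrict_pair_add_le [Fintype δ] (hp : ∀ ω, 0 ≤ p ω) {ι : Type*} [DecidableEq ι]
    {V : ι → Type*} [∀ i, Fintype (V i)] (X : (i : ι) → Ω → V i) (W : Ω → δ) (S : Finset ι) :
    entropy p (fun ω => (S.restrict (X · ω), W ω)) + ((#S : ℝ) - 1) * entropy p W ≤
      ∑ i ∈ S, entropy p (fun ω => (X i ω, W ω)) := by
  induction S using Finset.induction_on with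
  | empty =>
    rw [entropy_congr_fibers (g := W) fun ω ω' _ _ => by
      simp [Prod.ext_iff, restrict_eq_restrict_iff]]
    simp
  | insert a S ha ih =>
    have h := condMutualInfo_nonneg (fun ω => S.restrict (X · ω)) (X a) W hp
    have hins : entropy p (fun ω => ((insert a S).restrict (X · ω), W ω)) =
        entropy p (fun ω => (S.restrict (X · ω), X a ω, W ω)) :=
      entropy_congr_fibers fun ω ω' _ _ => by
        simp only [Prod.mk.injEq, restrict_eq_restrict_iff, forall_mem_insert]
        tauto
    rw [condMutualInfo, ← hins] at h
    rw [card_insert_of_notMem ha, sum_insert ha]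
    push_cast
    linarith

theorem entropy_add_mul_mutualInfo_le [Fintype α] [Fintype β] [Fintype γ] (hp : ∀ ω, 0 ≤ p ω)
    (hp1 : ∑ ω, p ω = 1) {ι : Type*} [Fintype ι] [DecidableEq ι] {V : ι → Type*}
    [∀ i, Fintype (V i)] (X : (i : ι) → Ω → V i) (A : Ω → α) (B : Ω → β) (C : Ω → γ)
    (hAC : condMutualInfo p A C B = 0) (hBC : condMutualInfo p B C A = 0) :
    entropy p (fun ω i => X i ω) +
        ((Fintype.card ι : ℝ) - 1) * mutualInfo p (fun ω => (A ω, B ω)) C ≤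
      ∑ i, entropy p (X i) + ∑ i, condMutualInfo p A B (X i) := by
  rcases isEmpty_or_nonempty ι with hι | hι
  · simp [entropy_of_subsingleton hp1, mutualInfo_nonneg hp hp1]
  have hjoint : entropy p (fun ω i => X i ω) ≤
      entropy p (fun ω => (univ.restrict (X · ω), commonPart p A B ω)) :=
    (entropy_congr_fibers fun ω ω' _ _ => by simp [funext_iff]).trans_le
      (entropy_le_entropy_pair hp _ _)
  have hsub := entropy_restrict_pair_add_le hp X (commonPart p A B) univ
  have hcommon : ∑ i, (entropy p (fun ω => (X i ω, commonPart p A B ω)) - entropy p (X i)) ≤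
      ∑ i, condMutualInfo p A B (X i) :=
    sum_le_sum fun i _ => entropy_pair_commonPart_sub_le A B hp (X i)
  have hmutual : ((Fintype.card ι : ℝ) - 1) * mutualInfo p (fun ω => (A ω, B ω)) C ≤
      ((Fintype.card ι : ℝ) - 1) * entropy p (commonPart p A B) :=
    mul_le_mul_of_nonneg_left (mutualInfo_le_entropy_commonPart A B C hp hAC hBC)
      (sub_nonneg.2 (Nat.one_le_cast.2 Fintype.card_pos))
  rw [sum_sub_distrib] at hcommon
  rw [card_univ] at hsub
  linarith

end FiniteEntropy

open FiniteEntropy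

section Coordinates

variable {ι : Type*} [Fintype ι] [DecidableEq ι] {s : ι → Type*} [∀ i, Fintype (s i)]
  [∀ i, DecidableEq (s i)] (p : ((i : ι) → s i) → ℝ)

theorem marginal_eq_law (J : Finset ι) (a : (i : J) → s i.1) :
    marginal p J a = law p J.restrict a := by
  refine sum_nbij' (J.mergePi a) (fun ω i => ω i.1) (fun z _ => ?_) (fun _ _ => mem_univ _)
    (fun z _ => ?_) (fun ω hω => ?_) fun _ _ => rfl
  · simp only [mem_filter, mem_univ, true_and]
    funext i
    simp [Finset.mergePi, i.2]
  · funext i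
    simp [Finset.mergePi, mem_compl.1 i.2]
  · simp only [mem_filter, mem_univ, true_and] at hω
    funext i
    by_cases h : i ∈ J
    · simp only [Finset.mergePi, h, dif_pos, ← hω, restrict]
    · simp [Finset.mergePi, h]

theorem Hsh_eq_entropy (J : Finset ι) : Hsh p J = entropy p J.restrict := by
  simp only [Hsh, entropy, marginal_eq_law]

theorem Ish_eq_condMutualInfo (α β γ : Finset ι) :
    Ish p α β γ = condMutualInfo p α.restrict β.restrict γ.restrict := by
  have union (J K : Finset ι) : entropy p (J ∪ K).restrict =
      entropy p (fun ω => (J.restrict ω, K.restrict ω)) :=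
    entropy_congr_fibers fun ω ω' _ _ => by
      simp only [Prod.mk.injEq, restrict_eq_restrict_iff, forall_mem_union]
  have union₃ : entropy p (α ∪ β ∪ γ).restrict =
      entropy p (fun ω => (α.restrict ω, β.restrict ω, γ.restrict ω)) :=
    entropy_congr_fibers fun ω ω' _ _ => by
      simp only [Prod.mk.injEq, restrict_eq_restrict_iff, forall_mem_union, and_assoc]
  rw [Ish, condMutualInfo, Hsh_eq_entropy, Hsh_eq_entropy, Hsh_eq_entropy, Hsh_eq_entropy,
    union, union, union₃]

theorem Ish_empty_eq_mutualInfo (hp1 : ∑ ω, p ω = 1) (α β : Finset ι) :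
    Ish p α β ∅ = mutualInfo p α.restrict β.restrict := by
  rw [Ish_eq_condMutualInfo, condMutualInfo_of_subsingleton _ _ _ hp1]

end Coordinates

/-- The classical constrained inequality of Makarychev et al.: for jointly distributed
discrete random variables `A, B, C, X_1, …, X_n` (given by a joint pmf `p`) with
`I(A:C|B) = I(B:C|A) = 0`:
`H(X_1…X_n) + (n-1) I(AB:C) ≤ ∑ H(X_i) + ∑ I(A:B|X_i)`. -/
theorem classical_constrained_inequality (n : ℕ) (s : Idx n → Type)
    [∀ i, Fintype (s i)] [∀ i, DecidableEq (s i)]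
    (p : ((i : Idx n) → s i) → ℝ)
    (hp : ∀ x, 0 ≤ p x) (hp1 : ∑ x, p x = 1)
    (h1 : Ish p (pA n) (pC n) (pB n) = 0)
    (h2 : Ish p (pB n) (pC n) (pA n) = 0) :
    Hsh p (pXall n) + ((n : ℝ) - 1) * Ish p (pA n ∪ pB n) (pC n) ∅ ≤
      (∑ i : Fin n, Hsh p (pX n i)) + ∑ i : Fin n, Ish p (pA n) (pB n) (pX n i) := by
  rw [Ish_eq_condMutualInfo] at h1 h2
  have key := entropy_add_mul_mutualInfo_le hp hp1 (fun i => (pX n i).restrict)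
    _ _ _ h1 h2
  rw [Fintype.card_fin] at key
  have hX : Hsh p (pXall n) = entropy p (fun ω i => (pX n i).restrict ω) :=
    (Hsh_eq_entropy p _).trans <| entropy_congr_fibers fun ω ω' _ _ => by
      simp [pXall, pX, funext_iff]
  have hM : Ish p (pA n ∪ pB n) (pC n) ∅ = mutualInfo p
      (fun ω => ((pA n).restrict ω, (pB n).restrict ω)) (pC n).restrict := by
    rw [Ish_empty_eq_mutualInfo p hp1]
    exact mutualInfo_congr_left (fun ω ω' _ _ => by
      simp only [Prod.mk.injEq, restrict_eq_restrict_iff, forall_mem_union]) _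
  simpa only [hX, hM, Hsh_eq_entropy, Ish_eq_condMutualInfo] using key
end
end
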